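/- Let (K,|·|) be a normed field, f ∈ K[z] a polynomial of degree n ≥ 2 which splits over K, ξ ∈ Kⁿ a root-vector of f, and 1 ≤ p ≤ ∞ with conjugate exponent q. Suppose x ∈ Kⁿ has pairwise distinct components and ψ(E(x)) > 0, where E(x) = ‖(x − ξ)/d(x)‖_p, ψ(t) = 1 − 2^{1/q} t (1 + t/(n−1)^{1/p})^{n−1}. Then f has only simple zeros in K (ξ has pairwise distinct components), Tx has pairwise distinct components, E(Tx) ≤ E(x)·β(E(x))/ψ(E(x)), and |T_i(x) − ξ_i| ≤ β(E(x)) · |x_i − ξ_i| for every i, where T is the Weierstrass iteration function and β(t) = (1 + t/(n−1)^{1/p})^{n−1} − 1. -/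

import Mathlib

open Finset Filter Topology
open scoped ENNReal

noncomputable def pnorm {n : ℕ} (p : ℝ≥0∞) (v : Fin n → ℝ) : ℝ :=
  if p = ⊤ then ⨆ i, |v i| else (∑ i, |v i| ^ p.toReal) ^ (1 / p.toReal)

noncomputable def epow (a : ℝ) (p : ℝ≥0∞) : ℝ :=
  if p = ⊤ then 1 else a ^ (1 / p.toReal)

noncomputable def dsep {K : Type*} [NormedField K] {n : ℕ} (x : Fin n → K) (i : Fin n) : ℝ :=
  sInf {r : ℝ | ∃ j, j ≠ i ∧ r = ‖x i - x j‖}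

noncomputable def Wcorr {K : Type*} [NormedField K] {n : ℕ} (f : Polynomial K)
    (x : Fin n → K) (i : Fin n) : K :=
  Polynomial.eval (x i) f / (f.leadingCoeff * ∏ j ∈ Finset.univ.erase i, (x i - x j))

def IsRootVector {K : Type*} [NormedField K] {n : ℕ} (f : Polynomial K) (ξ : Fin n → K) : Prop :=
  ∀ z : K, Polynomial.eval z f = f.leadingCoeff * ∏ i, (z - ξ i)

/-!
Write `e = (x - ξ) / d(x)` and `t = ‖e‖_p = E(x)`. Since `ξ` is a root-vector,
`W_i(x) = (x_i - ξ_i) ∏_{j ≠ i} (1 + (x_j - ξ_j) / (x_i - x_j))`, and each quotient has absolute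
value at most `e_j` because `d_j(x) ≤ |x_i - x_j|`. Hölder's inequality gives
`e_i + e_j ≤ 2^{1/q} t`, and AM-GM followed by Hölder gives
`∏_{j ≠ i} (1 + e_j) ≤ (1 + t / (n - 1)^{1/p})^{n - 1} = 1 + β(t)`. Consequently
`|T_i x - ξ_i| ≤ β(t) |x_i - ξ_i|` and `|W_i(x)| ≤ e_i d_i(x) (1 + β(t))`, so
`|T_i x - T_j x| ≥ ψ(t) |x_i - x_j|`; thus `d(Tx) ≥ ψ(t) d(x)` componentwise, which yields the
bound on `E(Tx)`. Finally `e_i + e_j < 1` rules out `ξ_i = ξ_j`.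
-/

-- For `p = ⊤` both sides are `1`, since `⊤.toReal = 0` and `1 / 0 = 0`.
lemma epow_eq_rpow (a : ℝ) (p : ℝ≥0∞) : epow a p = a ^ (1 / p.toReal) := by
  unfold epow
  split_ifs with h <;> simp [h]

lemma ENNReal.one_div_toReal_add_one_div_toReal {p q : ℝ≥0∞} (hpq : 1 / p + 1 / q = 1) :
    1 / p.toReal + 1 / q.toReal = 1 := by
  have hp : p ≠ 0 := by rintro rfl; simp at hpq
  have hq : q ≠ 0 := by rintro rfl; simp at hpq
  have h := congrArg ENNReal.toReal hpq
  rw [ENNReal.toReal_add (by simpa using hp) (by simpa using hq)] at h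
  simpa using h

lemma epow_mul_epow_of_conj {a : ℝ} (ha : 0 < a) {p q : ℝ≥0∞} (hpq : 1 / p + 1 / q = 1) :
    epow a p * epow a q = a := by
  rw [epow_eq_rpow, epow_eq_rpow, ← Real.rpow_add ha,
    ENNReal.one_div_toReal_add_one_div_toReal hpq, Real.rpow_one]

lemma ENNReal.one_le_toReal_of_one_le {p : ℝ≥0∞} (hp : 1 ≤ p) (hp_top : p ≠ ⊤) : 1 ≤ p.toReal := by
  simpa using ENNReal.toReal_mono hp_top hp

lemma Real.prod_le_sum_div_card_pow {ι : Type*} (s : Finset ι) {z : ι → ℝ}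
    (hz : ∀ i ∈ s, 0 ≤ z i) : ∏ i ∈ s, z i ≤ ((∑ i ∈ s, z i) / #s) ^ #s := by
  rcases s.eq_empty_or_nonempty with rfl | hs
  · simp
  have hcard : (0 : ℝ) < #s := by exact_mod_cast hs.card_pos
  have h := Real.geom_mean_le_arith_mean s (fun _ => 1) z (fun _ _ => zero_le_one)
    (by simpa using hcard) hz
  simp only [Real.rpow_one, Finset.sum_const, nsmul_eq_mul, mul_one, one_mul] at h
  calc ∏ i ∈ s, z i = ((∏ i ∈ s, z i) ^ (#s : ℝ)⁻¹) ^ #s := by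
        rw [← Real.rpow_natCast, ← Real.rpow_mul (Finset.prod_nonneg hz),
          inv_mul_cancel₀ hcard.ne', Real.rpow_one]
    _ ≤ ((∑ i ∈ s, z i) / #s) ^ #s := by
        gcongr
        exact Real.rpow_nonneg (Finset.prod_nonneg hz) _

lemma norm_prod_one_add_sub_one_le_prod {ι R : Type*} [NormedCommRing R] [NormOneClass R]
    (s : Finset ι) (a : ι → R) :
    ‖∏ i ∈ s, (1 + a i) - 1‖ ≤ ∏ i ∈ s, (1 + ‖a i‖) - 1 := by
  classical
  induction s using Finset.induction_on with
  | empty => simp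
  | insert k s hk ih =>
    rw [Finset.prod_insert hk, Finset.prod_insert hk,
      show (1 + a k) * ∏ i ∈ s, (1 + a i) - 1 =
        (∏ i ∈ s, (1 + a i) - 1) + a k * ∏ i ∈ s, (1 + a i) by ring]
    have hprod : ‖∏ i ∈ s, (1 + a i)‖ ≤ ∏ i ∈ s, (1 + ‖a i‖) :=
      (Finset.norm_prod_le _ _).trans <| Finset.prod_le_prod (fun _ _ => norm_nonneg _)
        fun i _ => (norm_add_le _ _).trans_eq (by rw [norm_one])
    calc ‖(∏ i ∈ s, (1 + a i) - 1) + a k * ∏ i ∈ s, (1 + a i)‖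
        ≤ (∏ i ∈ s, (1 + ‖a i‖) - 1) + ‖a k‖ * ∏ i ∈ s, (1 + ‖a i‖) :=
          norm_add_le_of_le ih ((norm_mul_le _ _).trans (by gcongr))
      _ = (1 + ‖a k‖) * ∏ i ∈ s, (1 + ‖a i‖) - 1 := by ring

section PNorm

variable {n : ℕ} {p q : ℝ≥0∞}

lemma abs_le_pnorm (hp : 1 ≤ p) (v : Fin n → ℝ) (i : Fin n) : |v i| ≤ pnorm p v := by
  unfold pnorm
  split_ifs with hp_top
  · exact le_ciSup (f := fun j => |v j|) (Set.finite_range _).bddAbove i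
  · have hp0 : p.toReal ≠ 0 :=
      (zero_lt_one.trans_le (ENNReal.one_le_toReal_of_one_le hp hp_top)).ne'
    calc |v i| = (|v i| ^ p.toReal) ^ (1 / p.toReal) := by
          rw [← Real.rpow_mul (abs_nonneg _), mul_one_div_cancel hp0, Real.rpow_one]
      _ ≤ (∑ j, |v j| ^ p.toReal) ^ (1 / p.toReal) := by
          gcongr
          exact Finset.single_le_sum (f := fun j => |v j| ^ p.toReal)
            (fun j _ => by positivity) (Finset.mem_univ i)

lemma pnorm_le_mul_pnorm (hp : 1 ≤ p) {u w : Fin n → ℝ} {c : ℝ} (hc : 0 ≤ c)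
    (h : ∀ i, |u i| ≤ c * |w i|) : pnorm p u ≤ c * pnorm p w := by
  unfold pnorm
  split_ifs with hp_top
  · refine Real.iSup_le (fun i => (h i).trans ?_)
      (mul_nonneg hc (Real.iSup_nonneg fun i => abs_nonneg _))
    gcongr
    exact le_ciSup (f := fun j => |w j|) (Set.finite_range _).bddAbove i
  · have hp0 : p.toReal ≠ 0 :=
      (zero_lt_one.trans_le (ENNReal.one_le_toReal_of_one_le hp hp_top)).ne'
    calc (∑ i, |u i| ^ p.toReal) ^ (1 / p.toReal)
        ≤ (∑ i, c ^ p.toReal * |w i| ^ p.toReal) ^ (1 / p.toReal) := by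
          gcongr with i
          rw [← Real.mul_rpow hc (abs_nonneg _)]
          gcongr
          exact h i
      _ = c * (∑ i, |w i| ^ p.toReal) ^ (1 / p.toReal) := by
          rw [← Finset.mul_sum, Real.mul_rpow (by positivity) (by positivity), ← Real.rpow_mul hc,
            mul_one_div_cancel hp0, Real.rpow_one]

lemma sum_abs_le_epow_card_mul_pnorm (hp : 1 ≤ p) (hpq : 1 / p + 1 / q = 1) (v : Fin n → ℝ)
    (s : Finset (Fin n)) : ∑ i ∈ s, |v i| ≤ epow (#s : ℝ) q * pnorm p v := by
  by_cases hp_top : p = ⊤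
  · have hq : q = 1 := by simpa [hp_top] using hpq
    calc ∑ i ∈ s, |v i| ≤ #s • pnorm p v :=
          Finset.sum_le_card_nsmul _ _ _ fun i _ => abs_le_pnorm hp v i
      _ = epow (#s : ℝ) q * pnorm p v := by simp [epow_eq_rpow, hq]
  · have hpq' := ENNReal.one_div_toReal_add_one_div_toReal hpq
    have hmono : ∑ i ∈ s, |v i| ^ p.toReal ≤ ∑ i, |v i| ^ p.toReal :=
      Finset.sum_le_sum_of_subset_of_nonneg (Finset.subset_univ _) fun i _ _ => by positivity
    have h := Real.inner_le_weight_mul_Lp_of_nonneg s (ENNReal.one_le_toReal_of_one_le hp hp_top)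
      (fun _ => 1) (fun i => |v i|) (fun _ => zero_le_one) (fun i => abs_nonneg _)
    simp only [one_mul, Finset.sum_const, nsmul_eq_mul, mul_one] at h
    refine h.trans ?_
    rw [epow_eq_rpow, pnorm, if_neg hp_top, ← one_div,
      show 1 - 1 / p.toReal = 1 / q.toReal by linarith]
    gcongr

lemma prod_one_add_le_one_add_pnorm_div_epow_pow (hp : 1 ≤ p) (hpq : 1 / p + 1 / q = 1)
    {v : Fin n → ℝ} (hv : ∀ i, 0 ≤ v i) {s : Finset (Fin n)} (hs : s.Nonempty) :
    ∏ i ∈ s, (1 + v i) ≤ (1 + pnorm p v / epow (#s : ℝ) p) ^ #s := by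
  have hcard : (0 : ℝ) < #s := by exact_mod_cast hs.card_pos
  have hepow : 0 < epow (#s : ℝ) p := by rw [epow_eq_rpow]; positivity
  have hmean : (∑ i ∈ s, v i) / #s ≤ pnorm p v / epow (#s : ℝ) p := by
    calc (∑ i ∈ s, v i) / #s ≤ epow (#s : ℝ) q * pnorm p v / #s := by
          gcongr
          simpa only [abs_of_nonneg (hv _)] using sum_abs_le_epow_card_mul_pnorm hp hpq v s
      _ = pnorm p v / epow (#s : ℝ) p := by
          rw [div_eq_div_iff hcard.ne' hepow.ne']
          linear_combination pnorm p v * epow_mul_epow_of_conj hcard hpq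
  calc ∏ i ∈ s, (1 + v i) ≤ ((∑ i ∈ s, (1 + v i)) / #s) ^ #s :=
        Real.prod_le_sum_div_card_pow s fun i _ => by linarith [hv i]
    _ = (1 + (∑ i ∈ s, v i) / #s) ^ #s := by
        rw [Finset.sum_add_distrib, add_div]
        simp [hcard.ne']
    _ ≤ (1 + pnorm p v / epow (#s : ℝ) p) ^ #s := by
        gcongr
        exact add_nonneg zero_le_one (div_nonneg (Finset.sum_nonneg fun i _ => hv i) hcard.le)

lemma abs_add_abs_le_epow_two_mul_pnorm (hp : 1 ≤ p) (hpq : 1 / p + 1 / q = 1) (v : Fin n → ℝ)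
    {i j : Fin n} (h : i ≠ j) : |v i| + |v j| ≤ epow 2 q * pnorm p v := by
  simpa [Finset.sum_pair h, Finset.card_pair h] using
    sum_abs_le_epow_card_mul_pnorm hp hpq v {i, j}

lemma prod_erase_one_add_le (hn : 2 ≤ n) (hp : 1 ≤ p) (hpq : 1 / p + 1 / q = 1)
    {v : Fin n → ℝ} (hv : ∀ i, 0 ≤ v i) (i : Fin n) :
    ∏ j ∈ univ.erase i, (1 + v j) ≤ (1 + pnorm p v / epow ((n : ℝ) - 1) p) ^ (n - 1) := by
  have hcard : #(univ.erase i) = n - 1 := by simp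
  have hs : (univ.erase i).Nonempty := by rw [← Finset.card_pos, hcard]; omega
  simpa [hcard, Nat.cast_sub (by omega : 1 ≤ n)] using
    prod_one_add_le_one_add_pnorm_div_epow_pow hp hpq hv hs

end PNorm

section Separation

variable {K : Type*} [NormedField K] {n : ℕ}

lemma dsep_nonneg (x : Fin n → K) (i : Fin n) : 0 ≤ dsep x i :=
  Real.sInf_nonneg (by rintro _ ⟨j, -, rfl⟩; exact norm_nonneg _)

lemma dsep_le_norm_sub (x : Fin n → K) {i j : Fin n} (h : j ≠ i) : dsep x i ≤ ‖x i - x j‖ :=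
  csInf_le ⟨0, by rintro _ ⟨j, -, rfl⟩; exact norm_nonneg _⟩ ⟨j, h, rfl⟩

lemma dsep_set_nonempty (hn : 2 ≤ n) (x : Fin n → K) (i : Fin n) :
    {r : ℝ | ∃ j, j ≠ i ∧ r = ‖x i - x j‖}.Nonempty := by
  have := Fin.nontrivial_iff_two_le.mpr hn
  obtain ⟨j, hj⟩ := exists_ne i
  exact ⟨_, j, hj, rfl⟩

lemma le_dsep (hn : 2 ≤ n) (x : Fin n → K) (i : Fin n) {c : ℝ}
    (h : ∀ j, j ≠ i → c ≤ ‖x i - x j‖) : c ≤ dsep x i :=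
  le_csInf (dsep_set_nonempty hn x i) (by rintro _ ⟨j, hj, rfl⟩; exact h j hj)

lemma exists_dsep_eq (hn : 2 ≤ n) (x : Fin n → K) (i : Fin n) :
    ∃ j, j ≠ i ∧ dsep x i = ‖x i - x j‖ :=
  (dsep_set_nonempty hn x i).csInf_mem <| (Set.finite_range fun j => ‖x i - x j‖).subset
    (by rintro _ ⟨j, -, rfl⟩; exact ⟨j, rfl⟩)

lemma dsep_pos (hn : 2 ≤ n) {x : Fin n → K} (hx : Function.Injective x) (i : Fin n) :
    0 < dsep x i := by
  obtain ⟨j, hj, h⟩ := exists_dsep_eq hn x i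
  rw [h, norm_pos_iff, sub_ne_zero]
  exact fun e => hj (hx e).symm

end Separation

section Weierstrass

variable {K : Type*} [NormedField K] {n : ℕ}

noncomputable def weierstrassMap (f : Polynomial K) (x : Fin n → K) : Fin n → K :=
  fun i => x i - Wcorr f x i

noncomputable def relDist (x ξ : Fin n → K) : Fin n → ℝ :=
  fun i => ‖x i - ξ i‖ / dsep x i

lemma relDist_nonneg (x ξ : Fin n → K) (i : Fin n) : 0 ≤ relDist x ξ i :=
  div_nonneg (norm_nonneg _) (dsep_nonneg x i)

lemma one_le_prod_one_add_relDist (x ξ : Fin n → K) (s : Finset (Fin n)) :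
    1 ≤ ∏ j ∈ s, (1 + relDist x ξ j) :=
  Finset.one_le_prod fun j _ => le_add_of_nonneg_right (relDist_nonneg x ξ j)

variable {f : Polynomial K} {ξ x : Fin n → K}

lemma norm_sub_le_relDist_mul (hn : 2 ≤ n) (hx : Function.Injective x) {i j : Fin n}
    (h : j ≠ i) : ‖x i - ξ i‖ ≤ relDist x ξ i * ‖x i - x j‖ := by
  calc ‖x i - ξ i‖ = relDist x ξ i * dsep x i := (div_mul_cancel₀ _ (dsep_pos hn hx i).ne').symm
    _ ≤ relDist x ξ i * ‖x i - x j‖ := by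
        gcongr
        · exact relDist_nonneg x ξ i
        · exact dsep_le_norm_sub x h

lemma norm_div_sub_le_relDist (hn : 2 ≤ n) (hx : Function.Injective x) {i j : Fin n}
    (h : j ≠ i) : ‖(x j - ξ j) / (x i - x j)‖ ≤ relDist x ξ j := by
  have hij : 0 < ‖x i - x j‖ := norm_pos_iff.mpr (sub_ne_zero.mpr fun e => h (hx e).symm)
  rw [norm_div, div_le_iff₀ hij, norm_sub_rev (x i)]
  exact norm_sub_le_relDist_mul hn hx h.symm

lemma Wcorr_eq_mul_prod (hroot : IsRootVector f ξ) (hlc : f.leadingCoeff ≠ 0)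
    (hx : Function.Injective x) (i : Fin n) :
    Wcorr f x i = (x i - ξ i) * ∏ j ∈ univ.erase i, (1 + (x j - ξ j) / (x i - x j)) := by
  have hfactor : ∀ j ∈ univ.erase i, (x i - ξ j) / (x i - x j) = 1 + (x j - ξ j) / (x i - x j) :=
    fun j hj => by
      have hij : x i - x j ≠ 0 := sub_ne_zero.mpr fun e => (Finset.ne_of_mem_erase hj) (hx e).symm
      field_simp
      ring
  rw [Wcorr, hroot (x i), ← Finset.mul_prod_erase univ _ (mem_univ i), mul_div_mul_left _ _ hlc,
    mul_div_assoc, ← Finset.prod_div_distrib, Finset.prod_congr rfl hfactor]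

lemma norm_Wcorr_le (hroot : IsRootVector f ξ) (hlc : f.leadingCoeff ≠ 0) (hn : 2 ≤ n)
    (hx : Function.Injective x) (i : Fin n) :
    ‖Wcorr f x i‖ ≤ ‖x i - ξ i‖ * ∏ j ∈ univ.erase i, (1 + relDist x ξ j) := by
  rw [Wcorr_eq_mul_prod hroot hlc hx, norm_mul, norm_prod]
  gcongr with j hj
  exact (norm_add_le _ _).trans <| by
    rw [norm_one]; gcongr; exact norm_div_sub_le_relDist hn hx (Finset.ne_of_mem_erase hj)

lemma norm_weierstrassMap_sub_le (hroot : IsRootVector f ξ) (hlc : f.leadingCoeff ≠ 0)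
    (hn : 2 ≤ n) (hx : Function.Injective x) (i : Fin n) :
    ‖weierstrassMap f x i - ξ i‖ ≤ (∏ j ∈ univ.erase i, (1 + relDist x ξ j) - 1) * ‖x i - ξ i‖ := by
  have h : weierstrassMap f x i - ξ i
      = -((∏ j ∈ univ.erase i, (1 + (x j - ξ j) / (x i - x j)) - 1) * (x i - ξ i)) := by
    rw [weierstrassMap, Wcorr_eq_mul_prod hroot hlc hx]; ring
  rw [h, norm_neg, norm_mul]
  gcongr
  refine (norm_prod_one_add_sub_one_le_prod _ _).trans ?_
  gcongr with j hj
  exact norm_div_sub_le_relDist hn hx (Finset.ne_of_mem_erase hj)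

lemma injective_of_relDist_add_lt_one (hn : 2 ≤ n) (hx : Function.Injective x)
    (h : ∀ i j, j ≠ i → relDist x ξ i + relDist x ξ j < 1) : Function.Injective ξ := by
  intro i j hξ
  by_contra hne
  have hji : j ≠ i := Ne.symm hne
  have hpos : 0 < ‖x i - x j‖ := norm_pos_iff.mpr (sub_ne_zero.mpr fun e => hne (hx e))
  have hi := norm_sub_le_relDist_mul (ξ := ξ) hn hx hji
  have hj := norm_sub_le_relDist_mul (ξ := ξ) hn hx hji.symm
  rw [norm_sub_rev (x j) (x i)] at hj
  have htri : ‖x i - x j‖ ≤ ‖x i - ξ i‖ + ‖x j - ξ j‖ := by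
    calc ‖x i - x j‖ ≤ ‖x i - ξ i‖ + ‖ξ i - x j‖ := norm_sub_le_norm_sub_add_norm_sub _ _ _
      _ = ‖x i - ξ i‖ + ‖x j - ξ j‖ := by rw [hξ, norm_sub_rev (ξ j)]
  nlinarith [h i j hji]

variable {B c : ℝ}

lemma mul_norm_sub_le_norm_weierstrassMap_sub (hroot : IsRootVector f ξ)
    (hlc : f.leadingCoeff ≠ 0) (hn : 2 ≤ n) (hx : Function.Injective x)
    (hB : ∀ i, ∏ j ∈ univ.erase i, (1 + relDist x ξ j) ≤ B)
    (hc : ∀ i j, j ≠ i → relDist x ξ i + relDist x ξ j ≤ c) {i j : Fin n} (h : j ≠ i) :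
    (1 - c * B) * ‖x i - x j‖ ≤ ‖weierstrassMap f x i - weierstrassMap f x j‖ := by
  have hB0 : 0 ≤ B := zero_le_one.trans ((one_le_prod_one_add_relDist x ξ _).trans (hB i))
  have hW : ∀ k l, l ≠ k → ‖Wcorr f x k‖ ≤ relDist x ξ k * ‖x k - x l‖ * B := fun k l hlk =>
    (norm_Wcorr_le hroot hlc hn hx k).trans <| mul_le_mul (norm_sub_le_relDist_mul hn hx hlk)
      (hB k) (zero_le_one.trans (one_le_prod_one_add_relDist x ξ _))
      (mul_nonneg (relDist_nonneg x ξ k) (norm_nonneg _))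
  have hWi := hW i j h
  have hWj := hW j i h.symm
  rw [norm_sub_rev (x j)] at hWj
  have hsum : (relDist x ξ i + relDist x ξ j) * B * ‖x i - x j‖ ≤ c * B * ‖x i - x j‖ := by
    gcongr; exact hc i j h
  calc (1 - c * B) * ‖x i - x j‖ ≤ ‖x i - x j‖ - (‖Wcorr f x i‖ + ‖Wcorr f x j‖) := by linarith
    _ ≤ ‖x i - x j‖ - ‖Wcorr f x i - Wcorr f x j‖ := by gcongr; exact norm_sub_le _ _
    _ ≤ ‖(x i - x j) - (Wcorr f x i - Wcorr f x j)‖ := norm_sub_norm_le _ _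
    _ = ‖weierstrassMap f x i - weierstrassMap f x j‖ := by
        simp only [weierstrassMap]; ring_nf

lemma mul_dsep_le_dsep_weierstrassMap (hroot : IsRootVector f ξ)
    (hlc : f.leadingCoeff ≠ 0) (hn : 2 ≤ n) (hx : Function.Injective x)
    (hB : ∀ i, ∏ j ∈ univ.erase i, (1 + relDist x ξ j) ≤ B)
    (hc : ∀ i j, j ≠ i → relDist x ξ i + relDist x ξ j ≤ c) (hcB : 0 ≤ 1 - c * B) (i : Fin n) :
    (1 - c * B) * dsep x i ≤ dsep (weierstrassMap f x) i :=
  le_dsep hn _ i fun _ hj => (mul_le_mul_of_nonneg_left (dsep_le_norm_sub x hj) hcB).trans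
    (mul_norm_sub_le_norm_weierstrassMap_sub hroot hlc hn hx hB hc hj)

lemma weierstrassMap_injective (hroot : IsRootVector f ξ)
    (hlc : f.leadingCoeff ≠ 0) (hn : 2 ≤ n) (hx : Function.Injective x)
    (hB : ∀ i, ∏ j ∈ univ.erase i, (1 + relDist x ξ j) ≤ B)
    (hc : ∀ i j, j ≠ i → relDist x ξ i + relDist x ξ j ≤ c) (hcB : 0 < 1 - c * B) :
    Function.Injective (weierstrassMap f x) := by
  intro i j hij
  by_contra hne
  have hsep := mul_norm_sub_le_norm_weierstrassMap_sub hroot hlc hn hx hB hc (Ne.symm hne)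
  rw [hij, sub_self, norm_zero] at hsep
  exact (mul_pos hcB (norm_pos_iff.mpr (sub_ne_zero.mpr (hx.ne hne)))).not_ge hsep

lemma relDist_weierstrassMap_le (hroot : IsRootVector f ξ)
    (hlc : f.leadingCoeff ≠ 0) (hn : 2 ≤ n) (hx : Function.Injective x)
    (hB : ∀ i, ∏ j ∈ univ.erase i, (1 + relDist x ξ j) ≤ B)
    (hc : ∀ i j, j ≠ i → relDist x ξ i + relDist x ξ j ≤ c) (hcB : 0 < 1 - c * B) (i : Fin n) :
    relDist (weierstrassMap f x) ξ i ≤ (B - 1) / (1 - c * B) * relDist x ξ i := by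
  have hd := dsep_pos hn hx i
  calc relDist (weierstrassMap f x) ξ i
      ≤ (B - 1) * ‖x i - ξ i‖ / ((1 - c * B) * dsep x i) := by
        refine div_le_div₀ (mul_nonneg ?_ (norm_nonneg _)) ?_ (by positivity)
          (mul_dsep_le_dsep_weierstrassMap hroot hlc hn hx hB hc hcB.le i)
        · linarith [(one_le_prod_one_add_relDist x ξ _).trans (hB i)]
        · exact (norm_weierstrassMap_sub_le hroot hlc hn hx i).trans (by gcongr; exact hB i)
    _ = (B - 1) / (1 - c * B) * relDist x ξ i := by
        rw [relDist]; field_simp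

end Weierstrass

/-- second-kind contraction lemma. If `x` has pairwise distinct components
and `ψ(E(x)) > 0` where `E(x) = ‖(x−ξ)/d(x)‖_p`, then `ξ` has pairwise distinct
components, `Tx` has pairwise distinct components, `E(Tx) ≤ E(x)β(E(x))/ψ(E(x))` and
`|T_i(x) − ξ_i| ≤ β(E(x))|x_i − ξ_i|`. -/
theorem weierstrass_second_kind_contraction
    {K : Type*} [NormedField K] {n : ℕ} (hn : 2 ≤ n)
    (f : Polynomial K) (hdeg : f.natDegree = n)
    (ξ : Fin n → K) (hroot : IsRootVector f ξ)
    (p q : ℝ≥0∞) (hp : 1 ≤ p) (hpq : 1 / p + 1 / q = 1)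
    (E : (Fin n → K) → ℝ)
    (hE : ∀ y : Fin n → K, E y = pnorm p (fun i => ‖y i - ξ i‖ / dsep y i))
    (ψ β : ℝ → ℝ)
    (hψ : ∀ t : ℝ, ψ t = 1 - epow 2 q * t * (1 + t / epow ((n : ℝ) - 1) p) ^ (n - 1))
    (hβ : ∀ t : ℝ, β t = (1 + t / epow ((n : ℝ) - 1) p) ^ (n - 1) - 1)
    (x : Fin n → K) (hx : Function.Injective x) (hψx : 0 < ψ (E x)) :
    Function.Injective ξ ∧
    Function.Injective (fun i => x i - Wcorr f x i) ∧
    E (fun i => x i - Wcorr f x i) ≤ E x * β (E x) / ψ (E x) ∧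
    ∀ i : Fin n, ‖(x i - Wcorr f x i) - ξ i‖ ≤ β (E x) * ‖x i - ξ i‖ := by
  have hlc : f.leadingCoeff ≠ 0 :=
    Polynomial.leadingCoeff_ne_zero.mpr (Polynomial.ne_zero_of_natDegree_gt (n := 0) (by omega))
  have ht : E x = pnorm p (relDist x ξ) := hE x
  set B := (1 + E x / epow ((n : ℝ) - 1) p) ^ (n - 1)
  set c := epow 2 q * E x
  have hB : ∀ i, ∏ j ∈ univ.erase i, (1 + relDist x ξ j) ≤ B := fun i => by
    simpa only [B, ht] using prod_erase_one_add_le hn hp hpq (relDist_nonneg x ξ) i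
  have hB1 : 1 ≤ B := (one_le_prod_one_add_relDist x ξ _).trans (hB ⟨0, by omega⟩)
  have hc : ∀ i j, j ≠ i → relDist x ξ i + relDist x ξ j ≤ c := fun i j h => by
    simpa only [c, ht, abs_of_nonneg (relDist_nonneg x ξ _)] using
      abs_add_abs_le_epow_two_mul_pnorm hp hpq (relDist x ξ) h.symm
  have hψ' : ψ (E x) = 1 - c * B := hψ _
  have hβ' : β (E x) = B - 1 := hβ _
  have hcB : 0 < 1 - c * B := hψ' ▸ hψx
  refine ⟨?_, weierstrassMap_injective hroot hlc hn hx hB hc hcB, ?_, fun i => ?_⟩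
  · refine injective_of_relDist_add_lt_one hn hx fun i j h => ?_
    nlinarith [hc i j h, relDist_nonneg x ξ i, relDist_nonneg x ξ j]
  · rw [hE, hψ', hβ', ht, mul_comm, mul_div_right_comm]
    exact pnorm_le_mul_pnorm hp (div_nonneg (by linarith) hcB.le) fun i =>
      (abs_of_nonneg (relDist_nonneg _ ξ i)).trans_le <|
        (relDist_weierstrassMap_le hroot hlc hn hx hB hc hcB i).trans_eq
          (by rw [abs_of_nonneg (relDist_nonneg x ξ i)])
  · exact (norm_weierstrassMap_sub_le hroot hlc hn hx i).trans (by rw [hβ']; gcongr; exact hB i)
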